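/- Let H be the binary entropy function. The function g(t) = (1 + t/4)·H(4/(4+t)) - t/2 on [0, 2] is maximized at t = 4/3, with maximum value (4/3)·H(3/4) - 2/3. -/

import Mathlib

/-- Binary entropy function (base 2), with H(0)=H(1)=0 via `Real.logb 2 0 = 0`. -/
noncomputable def binH (p : ℝ) : ℝ := -(p * Real.logb 2 p) - (1 - p) * Real.logb 2 (1 - p)

/-!
Gibbs' inequality bounds `H(p)` by the cross entropy `-p log₂ q - (1-p) log₂ (1-q)`, which is affine
in `p`. Taking `p = 4/(4+t)` and `q = 3/4` and multiplying by `1 + t/4`, the bound on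
`(1 + t/4) H(4/(4+t))` becomes `log₂ (4/3) + t/2`, so `g t ≤ log₂ (4/3)`, with equality at
`t = 4/3`, where `p = q`.
-/

open Real

lemma mul_log_le_mul_log_add_sub {p q : ℝ} (hp : 0 ≤ p) (hq : 0 < q) :
    p * log q ≤ p * log p + (q - p) := by
  rcases hp.eq_or_lt with rfl | hp
  · simpa using hq.le
  have h := log_le_sub_one_of_pos (div_pos hq hp)
  rw [log_div hq.ne' hp.ne'] at h
  have : p * (log q - log p) ≤ p * (q / p - 1) := mul_le_mul_of_nonneg_left h hp.le
  rw [mul_sub, mul_sub, mul_div_cancel₀ _ hp.ne', mul_one] at this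
  linarith

lemma binH_le_crossEntropy {p q : ℝ} (hp₀ : 0 ≤ p) (hp₁ : p ≤ 1) (hq₀ : 0 < q) (hq₁ : q < 1) :
    binH p ≤ -(p * logb 2 q) - (1 - p) * logb 2 (1 - q) := by
  have h₁ := mul_log_le_mul_log_add_sub hp₀ hq₀
  have h₂ := mul_log_le_mul_log_add_sub (sub_nonneg.2 hp₁) (sub_pos.2 hq₁)
  have hlog2 : 0 < log 2 := log_pos one_lt_two
  unfold binH logb
  rw [← sub_nonneg]
  have : -(p * (log q / log 2)) - (1 - p) * (log (1 - q) / log 2) -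
      (-(p * (log p / log 2)) - (1 - p) * (log (1 - p) / log 2)) =
      (p * log p + (1 - p) * log (1 - p) - p * log q - (1 - p) * log (1 - q)) / log 2 := by
    ring
  rw [this]
  apply div_nonneg _ hlog2.le
  linarith

lemma mul_binH_div_le {a b q : ℝ} (ha : 0 < a) (hb : 0 ≤ b) (hq₀ : 0 < q) (hq₁ : q < 1) :
    (a + b) * binH (a / (a + b)) ≤ -(a * logb 2 q) - b * logb 2 (1 - q) := by
  have hab : 0 < a + b := by linarith
  have h := binH_le_crossEntropy (div_nonneg ha.le hab.le)
    ((div_le_one hab).2 (by linarith)) hq₀ hq₁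
  have e₁ : (a + b) * (a / (a + b)) = a := mul_div_cancel₀ _ hab.ne'
  have e₂ : (a + b) * (1 - a / (a + b)) = b := by rw [mul_sub, e₁]; ring
  calc (a + b) * binH (a / (a + b))
      ≤ (a + b) * (-(a / (a + b) * logb 2 q) - (1 - a / (a + b)) * logb 2 (1 - q)) :=
        mul_le_mul_of_nonneg_left h hab.le
    _ = -(a * logb 2 q) - b * logb 2 (1 - q) := by
        rw [mul_sub, mul_neg, ← mul_assoc, ← mul_assoc, e₁, e₂]

lemma logb_two_one_sub_three_quarters : logb 2 (1 - 3 / 4 : ℝ) = -2 := by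
  rw [show (1 - 3 / 4 : ℝ) = 2 ^ (-2 : ℝ) by norm_num, logb_rpow two_pos (by norm_num)]

/-- g(t) = (1+t/4)·H(4/(4+t)) - t/2 on [0,2] is maximized at t = 4/3,
with maximum value (4/3)·H(3/4) - 2/3. -/
theorem stmt_1 :
    (∀ t ∈ Set.Icc (0 : ℝ) 2,
      (1 + t / 4) * binH (4 / (4 + t)) - t / 2 ≤ (4 / 3) * binH (3 / 4) - 2 / 3) ∧
    (4 / 3 : ℝ) ∈ Set.Icc (0 : ℝ) 2 ∧
    (1 + (4 / 3 : ℝ) / 4) * binH (4 / (4 + 4 / 3)) - (4 / 3) / 2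
      = (4 / 3) * binH (3 / 4) - 2 / 3 := by
  have hmax : (4 / 3) * binH (3 / 4) - 2 / 3 = -logb 2 (3 / 4) := by
    unfold binH
    rw [logb_two_one_sub_three_quarters]
    ring
  refine ⟨fun t ht => ?_, by norm_num, by norm_num⟩
  have h := mul_binH_div_le one_pos (div_nonneg ht.1 (by norm_num : (0 : ℝ) ≤ 4))
    (by norm_num : (0 : ℝ) < 3 / 4) (by norm_num)
  rw [logb_two_one_sub_three_quarters,
    show (1 : ℝ) / (1 + t / 4) = 4 / (4 + t) by field_simp] at h
  rw [hmax]
  linarith
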